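/- Let A be a unital alternative *-algebra over ℂ containing a nontrivial symmetric idempotent e satisfying conditions (♠) and (♣), and let Φ : A → A be a map satisfying the *-Jordan n-derivation identity in the last two slots. Then for each i ∈ {1,2} and all a_{ii}, b_{ii} ∈ A_{ii} one has Φ(a_{ii} + b_{ii}) = Φ(a_{ii}) + Φ(b_{ii}). -/

import Mathlib

/-- The Jordan `•`-product `a • b = ab + b a*`. -/
def starJordan {A : Type*} [NonAssocRing A] [StarRing A] (a b : A) : A :=
  a * b + b * star a

/-- Left-normed iterated Jordan `•`-product of a list (empty list ↦ 0, junk value). -/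
def leftStarJordan {A : Type*} [NonAssocRing A] [StarRing A] : List A → A
  | [] => 0
  | x :: xs => xs.foldl starJordan x

/-- The family `a₁ = ⋯ = a_{n-2} = 1`, `a_{n-1} = x`, `a_n = y`. -/
def lastTwoFamily {A : Type*} [One A] (n : ℕ) (x y : A) : Fin n → A :=
  fun i => if (i : ℕ) = n - 2 then x else if (i : ℕ) = n - 1 then y else 1

/-- `e₁ = e`, `e₂ = 1 - e`. -/
def peirceIdem {A : Type*} [NonAssocRing A] (e : A) : Fin 2 → A :=
  fun i => if i = 0 then e else 1 - e

/-- Membership in the Peirce component `A_{ij}`: `eᵢ x = x` and `x eⱼ = x`. -/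
def inPeirce {A : Type*} [NonAssocRing A] (e : A) (i j : Fin 2) (x : A) : Prop :=
  peirceIdem e i * x = x ∧ x * peirceIdem e j = x

/-- The inner derivation `Ξ_{y,z}(a) = y(za) − z(ya) + y(az) − (ya)z + (az)y − (ay)z`. -/
def innerDer {A : Type*} [NonAssocRing A] (y z a : A) : A :=
  y * (z * a) - z * (y * a) + y * (a * z) - (y * a) * z + (a * z) * y - (a * y) * z

/-!
Write `n = N + 2` and `K = 2 ^ N`. Since `1 • 1 = 2`, the `n`-derivation identity with leading
slots `1` reads `Φ (K (x • y)) = K (Φ x • y) + K (x • Φ y) + g x y` with `g` biadditive, so the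
defect `D = Φ (s + t) - Φ s - Φ t` satisfies
`K (x • D) = Φ (K (x • (s + t))) - Φ (K (x • s)) - Φ (K (x • t))`, and symmetrically `D • y`.
Choosing `x, y` among `e`, `1 - e`, `2e - 1` makes the right-hand side vanish, and the Peirce rules
of an alternative algebra then force `D = 0`: first on `A₁₂ + A₂₁`, then on `A₁₁ + (A₁₂ + A₂₁)`,
then on `A₁₂`, and finally on `A₁₁`, where `D ∈ A₁₁` annihilates `A₁₂`, so `(D r)(1 - e) = 0` for
all `r` and `(♣)` gives `D = 0`. The case of `A₂₂` is that of `A₁₁` for the idempotent `1 - e`,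
with `(♠)` in place of `(♣)`.
-/

section StarJordan

variable {A : Type*} [NonAssocRing A] [StarRing A]

lemma starJordan_add_left (x x' y : A) :
    starJordan (x + x') y = starJordan x y + starJordan x' y := by
  simp only [starJordan, star_add, mul_add, add_mul]; abel

lemma starJordan_add_right (x y y' : A) :
    starJordan x (y + y') = starJordan x y + starJordan x y' := by
  simp only [starJordan, mul_add, add_mul]; abel

lemma starJordan_sub_left (x x' y : A) :
    starJordan (x - x') y = starJordan x y - starJordan x' y := by
  simp only [starJordan, star_sub, mul_sub, sub_mul]; abel

lemma starJordan_sub_right (x y y' : A) :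
    starJordan x (y - y') = starJordan x y - starJordan x y' := by
  simp only [starJordan, mul_sub, sub_mul]; abel

@[simp] lemma starJordan_zero_left (y : A) : starJordan 0 y = 0 := by simp [starJordan]

@[simp] lemma starJordan_zero_right (x : A) : starJordan x 0 = 0 := by simp [starJordan]

lemma starJordan_one_left (y : A) : starJordan 1 y = y + y := by simp [starJordan]

lemma starJordan_one_right (x : A) : starJordan x 1 = x + star x := by simp [starJordan]

lemma starJordan_one_sub_left (x y : A) : starJordan (1 - x) y = y + y - starJordan x y := by
  rw [starJordan_sub_left, starJordan_one_left]

lemma starJordan_nsmul_left (k : ℕ) (x y : A) :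
    starJordan (k • x) y = k • starJordan x y := by
  simp only [starJordan, star_nsmul, smul_mul_assoc, mul_smul_comm, smul_add]

lemma starJordan_natCast_left (c : ℕ) (y : A) : starJordan (c : A) y = (2 * c) • y := by
  rw [← nsmul_one, starJordan_nsmul_left, starJordan_one_left, ← two_nsmul, smul_smul, mul_comm]

lemma IsSelfAdjoint.starJordan_eq {x : A} (hx : IsSelfAdjoint x) (y : A) :
    starJordan x y = x * y + y * x := by
  rw [starJordan, hx.star_eq]

def starJordanHom : A →+ A →+ A :=
  AddMonoidHom.mk' (fun x => AddMonoidHom.mk' (starJordan x) (starJordan_add_right x))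
    fun x x' => by ext y; exact starJordan_add_left x x' y

theorem eq_zero_of_starJordan_eq_zero [IsAddTorsionFree A] {x y : A}
    (h₁ : starJordan x y = 0) (h₂ : starJordan (1 - x) y = 0) : y = 0 := by
  rw [starJordan_one_sub_left, h₁, sub_zero, ← two_nsmul] at h₂
  exact (nsmul_eq_zero_iff_right two_ne_zero).mp h₂

end StarJordan

section LastTwoFamily

variable {A : Type*} [One A] {N : ℕ} (x y z : A)

@[simp] lemma lastTwoFamily_castAdd (i : Fin N) :
    lastTwoFamily (N + 2) x y (Fin.castAdd 2 i) = 1 := by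
  simp only [lastTwoFamily, Fin.val_castAdd]
  rw [if_neg (by omega), if_neg (by omega)]

@[simp] lemma lastTwoFamily_natAdd_zero : lastTwoFamily (N + 2) x y (Fin.natAdd N 0) = x := by
  simp [lastTwoFamily]

@[simp] lemma lastTwoFamily_natAdd_one : lastTwoFamily (N + 2) x y (Fin.natAdd N 1) = y := by
  simp [lastTwoFamily]

lemma List.ofFn_eq_append_pair {α : Type*} (f : Fin (N + 2) → α) :
    List.ofFn f = List.ofFn (fun i : Fin N => f (Fin.castAdd 2 i)) ++
      [f (Fin.natAdd N 0), f (Fin.natAdd N 1)] := by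
  rw [List.ofFn_add]
  simp [List.ofFn_succ]
  rfl

lemma ofFn_lastTwoFamily :
    List.ofFn (lastTwoFamily (N + 2) x y) = List.replicate N 1 ++ [x, y] := by
  rw [List.ofFn_eq_append_pair]
  simp

lemma ofFn_update_lastTwoFamily_castAdd (k : Fin N) :
    List.ofFn (Function.update (lastTwoFamily (N + 2) x y) (Fin.castAdd 2 k) z) =
      List.ofFn (Function.update (fun _ : Fin N => (1 : A)) k z) ++ [x, y] := by
  have hne : ∀ j : Fin 2, Fin.natAdd N j ≠ Fin.castAdd 2 k := fun j h => by
    have := congrArg Fin.val h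
    simp only [Fin.val_natAdd, Fin.val_castAdd] at this
    omega
  rw [List.ofFn_eq_append_pair, Function.update_of_ne (hne 0), Function.update_of_ne (hne 1),
    lastTwoFamily_natAdd_zero, lastTwoFamily_natAdd_one]
  congr 2
  funext i
  simp [Function.update_apply]

lemma ofFn_update_lastTwoFamily_natAdd_zero :
    List.ofFn (Function.update (lastTwoFamily (N + 2) x y) (Fin.natAdd N 0) z) =
      List.replicate N 1 ++ [z, y] := by
  have hval : ∀ i : Fin N, (i : ℕ) ≠ N := fun i => i.is_lt.ne
  rw [List.ofFn_eq_append_pair]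
  simp [Fin.ext_iff, hval]

lemma ofFn_update_lastTwoFamily_natAdd_one :
    List.ofFn (Function.update (lastTwoFamily (N + 2) x y) (Fin.natAdd N 1) z) =
      List.replicate N 1 ++ [x, z] := by
  have hval : ∀ i : Fin N, (i : ℕ) ≠ N + 1 := fun i => by omega
  rw [List.ofFn_eq_append_pair]
  simp [Fin.ext_iff, hval]

end LastTwoFamily

section LeftNormed

variable {A : Type*} [NonAssocRing A] [StarRing A]

lemma foldl_starJordan_replicate_one (j c : ℕ) :
    (List.replicate j (1 : A)).foldl starJordan (c : A) = ((2 ^ j * c : ℕ) : A) := by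
  induction j generalizing c with
  | zero => simp
  | succ j ih =>
    rw [List.replicate_succ, List.foldl_cons, starJordan_natCast_left, nsmul_one, ih]
    congr 1
    ring

lemma leftStarJordan_replicate_one_append (N : ℕ) (x : A) (ys : List A) :
    leftStarJordan (List.replicate N 1 ++ x :: ys) = ys.foldl starJordan (2 ^ N • x) := by
  cases N with
  | zero => simp [leftStarJordan]
  | succ N =>
    have h := foldl_starJordan_replicate_one (A := A) N 1
    rw [Nat.cast_one] at h
    rw [List.replicate_succ, List.cons_append, leftStarJordan, List.foldl_append, h,
      List.foldl_cons, starJordan_natCast_left, pow_succ]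
    ring_nf

lemma leftStarJordan_append_pair {l : List A} (hl : l ≠ []) (x y : A) :
    leftStarJordan (l ++ [x, y]) = starJordan (starJordan (leftStarJordan l) x) y := by
  obtain ⟨a, l, rfl⟩ := List.exists_cons_of_ne_nil hl
  simp [leftStarJordan, List.foldl_append]

end LeftNormed

section JordanDerivationUpTo

variable {A : Type*} [NonAssocRing A] [StarRing A]

/-- For `K = 2 ^ (n - 2)` this is what the `n`-derivation identity with leading slots `1` gives:
`g` collects the terms in which `Φ` falls on one of the leading `1`s. -/
def IsJordanDerivationUpTo (K : ℕ) (g : A →+ A →+ A) (Φ : A → A) : Prop :=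
  ∀ x y, Φ (K • starJordan x y) = g x y + K • starJordan (Φ x) y + K • starJordan x (Φ y)

theorem exists_isJordanDerivationUpTo {N : ℕ} {Φ : A → A}
    (hΦ : ∀ x y : A,
      Φ (leftStarJordan (List.ofFn (lastTwoFamily (N + 2) x y))) =
        ∑ k : Fin (N + 2), leftStarJordan (List.ofFn
          (Function.update (lastTwoFamily (N + 2) x y) k (Φ (lastTwoFamily (N + 2) x y k))))) :
    ∃ g, IsJordanDerivationUpTo (2 ^ N) g Φ := by
  let c : Fin N → A := fun k =>
    leftStarJordan (List.ofFn (Function.update (fun _ : Fin N => (1 : A)) k (Φ 1)))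
  refine ⟨∑ k, starJordanHom.comp (starJordanHom (c k)), fun x y => ?_⟩
  have h := hΦ x y
  rw [Fin.sum_univ_add, Fin.sum_univ_two] at h
  simp only [lastTwoFamily_castAdd, lastTwoFamily_natAdd_zero, lastTwoFamily_natAdd_one,
    ofFn_lastTwoFamily, ofFn_update_lastTwoFamily_castAdd, ofFn_update_lastTwoFamily_natAdd_zero,
    ofFn_update_lastTwoFamily_natAdd_one, leftStarJordan_replicate_one_append] at h
  have hne : ∀ k : Fin N,
      List.ofFn (Function.update (fun _ : Fin N => (1 : A)) k (Φ 1)) ≠ [] :=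
    fun k => mt List.ofFn_eq_nil_iff.1 k.pos.ne'
  simp only [leftStarJordan_append_pair (hne _), List.foldl_cons, List.foldl_nil,
    starJordan_nsmul_left] at h
  rw [h, AddMonoidHom.finsetSum_apply, AddMonoidHom.finsetSum_apply, add_assoc]
  rfl

end JordanDerivationUpTo

section Peirce

variable {A : Type*} [NonAssocRing A] {ε x y : A} {i j : Fin 2}

-- `inPeirce ε i j` is the paper's `A_{i+1, j+1}`.

lemma inPeirce_zero_zero_iff : inPeirce ε 0 0 x ↔ ε * x = x ∧ x * ε = x := by
  simp [inPeirce, peirceIdem]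

lemma inPeirce_zero_one_iff : inPeirce ε 0 1 x ↔ ε * x = x ∧ x * ε = 0 := by
  simp [inPeirce, peirceIdem, mul_sub]

lemma inPeirce_one_zero_iff : inPeirce ε 1 0 x ↔ ε * x = 0 ∧ x * ε = x := by
  simp [inPeirce, peirceIdem, sub_mul]

lemma inPeirce_one_sub_zero_zero_iff : inPeirce (1 - ε) 0 0 x ↔ inPeirce ε 1 1 x := by
  simp [inPeirce, peirceIdem]

lemma inPeirce.add (hx : inPeirce ε i j x) (hy : inPeirce ε i j y) : inPeirce ε i j (x + y) :=
  ⟨by rw [mul_add, hx.1, hy.1], by rw [add_mul, hx.2, hy.2]⟩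

lemma inPeirce.nsmul (hx : inPeirce ε i j x) (k : ℕ) : inPeirce ε i j (k • x) :=
  ⟨by rw [mul_smul_comm, hx.1], by rw [smul_mul_assoc, hx.2]⟩

lemma inPeirce.star [StarRing A] (hε : IsSelfAdjoint ε) (hx : inPeirce ε i j x) :
    inPeirce ε j i (star x) := by
  have hidem : ∀ k, Star.star (peirceIdem ε k) = peirceIdem ε k := by
    intro k
    simp only [peirceIdem]
    split_ifs
    · exact hε.star_eq
    · rw [star_sub, star_one, hε.star_eq]
  exact ⟨by rw [← hidem j, ← star_mul, hx.2], by rw [← hidem i, ← star_mul, hx.1]⟩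

lemma inPeirce_self (hε : IsIdempotentElem ε) : inPeirce ε 0 0 ε :=
  inPeirce_zero_zero_iff.mpr ⟨hε.eq, hε.eq⟩

end Peirce

section Alternative

variable {A : Type*} [NonAssocRing A]
  (halt₁ : ∀ a b : A, a * a * b = a * (a * b)) (halt₂ : ∀ a b : A, b * a * a = b * (a * a))

include halt₁ in
lemma linearize_left_alternative (a b c : A) :
    (a * b + b * a) * c = a * (b * c) + b * (a * c) := by
  have h : (a * b + b * a) * c - (a * (b * c) + b * (a * c)) =
      ((a + b) * (a + b) * c - (a + b) * ((a + b) * c)) - (a * a * c - a * (a * c))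
        - (b * b * c - b * (b * c)) := by
    simp only [add_mul, mul_add]; abel
  simpa only [halt₁, sub_self, sub_zero, sub_eq_zero] using h

include halt₂ in
lemma linearize_right_alternative (a b c : A) : c * (a * b + b * a) = c * a * b + c * b * a := by
  have h : c * (a * b + b * a) - (c * a * b + c * b * a) =
      (c * ((a + b) * (a + b)) - c * (a + b) * (a + b)) - (c * (a * a) - c * a * a)
        - (c * (b * b) - c * b * b) := by
    simp only [add_mul, mul_add]; abel
  simpa only [halt₂, sub_self, sub_zero, sub_eq_zero] using h

include halt₁ halt₂ in
lemma flexible_of_alternative (a b : A) : a * b * a = a * (b * a) := by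
  have h := linearize_left_alternative halt₁ a b a
  rw [add_mul, ← halt₂] at h
  exact add_right_cancel h

end Alternative

section PeirceAlternative

variable {A : Type*} [NonAssocRing A]
  (halt₁ : ∀ a b : A, a * a * b = a * (a * b)) (halt₂ : ∀ a b : A, b * a * a = b * (a * a))
  {ε x m m' v : A}

include halt₁ halt₂

lemma inPeirce.mul_00_01 (hx : inPeirce ε 0 0 x) (hm : inPeirce ε 0 1 m) :
    inPeirce ε 0 1 (x * m) := by
  rw [inPeirce_zero_zero_iff] at hx
  rw [inPeirce_zero_one_iff] at hm ⊢
  constructor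
  · have h := linearize_left_alternative halt₁ ε x m
    rw [hx.1, hx.2, hm.1, add_mul] at h
    exact (add_right_cancel h).symm
  · have h := linearize_right_alternative halt₂ m ε x
    rw [hm.2, hm.1, hx.2, zero_add] at h
    exact right_eq_add.mp h

lemma inPeirce.mul_01_01 (hm : inPeirce ε 0 1 m) (hm' : inPeirce ε 0 1 m') :
    inPeirce ε 1 0 (m * m') := by
  rw [inPeirce_zero_one_iff] at hm hm'
  rw [inPeirce_one_zero_iff]
  constructor
  · have h := linearize_left_alternative halt₁ ε m m'
    rw [hm.1, hm.2, add_zero, hm'.1] at h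
    exact right_eq_add.mp h
  · have h := linearize_right_alternative halt₂ m' ε m
    rw [hm'.2, hm'.1, hm.2, zero_add, zero_mul, add_zero] at h
    exact h.symm

lemma inPeirce.mul_01_10 (hm : inPeirce ε 0 1 m) (hv : inPeirce ε 1 0 v) :
    inPeirce ε 0 0 (m * v) := by
  rw [inPeirce_zero_one_iff] at hm
  rw [inPeirce_one_zero_iff] at hv
  rw [inPeirce_zero_zero_iff]
  constructor
  · have h := linearize_left_alternative halt₁ ε m v
    rw [hm.1, hm.2, add_zero, hv.1, mul_zero, add_zero] at h
    exact h.symm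
  · have h := linearize_right_alternative halt₂ v ε m
    rw [hv.2, hv.1, add_zero, hm.2, zero_mul, add_zero] at h
    exact h.symm

omit halt₁ in
lemma inPeirce.mul_01_00_eq_zero [IsAddTorsionFree A] (hε : IsIdempotentElem ε)
    (hm : inPeirce ε 0 1 m) (hx : inPeirce ε 0 0 x) : m * x = 0 := by
  rw [inPeirce_zero_one_iff] at hm
  rw [inPeirce_zero_zero_iff] at hx
  have h := linearize_right_alternative halt₂ ε x m
  rw [hx.1, hx.2, hm.2, zero_mul, zero_add, mul_add] at h
  have hε' : m * x * ε = 0 := by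
    have h' : m * x * ε + m * x * ε = m * x * ε := by rw [← add_mul, h, halt₂, hε.eq]
    exact add_eq_left.mp h'
  rwa [hε', ← two_nsmul, two_nsmul_eq_zero] at h

omit halt₂ in
lemma inPeirce.mul_one_sub_mul_eq_zero [IsAddTorsionFree A] (hε : IsIdempotentElem ε)
    (hx : inPeirce ε 0 0 x) (r : A) : x * ((1 - ε) * r) = 0 := by
  rw [inPeirce_zero_zero_iff] at hx
  have hv : ε * ((1 - ε) * r) = 0 := by
    rw [sub_mul, one_mul, mul_sub, ← halt₁, hε.eq, sub_self]
  have h := linearize_left_alternative halt₁ ε x ((1 - ε) * r)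
  rw [hx.1, hx.2, hv, mul_zero, add_zero, add_mul] at h
  have hε' : ε * (x * ((1 - ε) * r)) = 0 := by
    have h' : ε * (x * ((1 - ε) * r)) + ε * (x * ((1 - ε) * r)) =
        ε * (x * ((1 - ε) * r)) := by
      rw [← mul_add, h, ← halt₁, hε.eq]
    exact add_eq_left.mp h'
  rwa [hε', ← two_nsmul, two_nsmul_eq_zero] at h

lemma inPeirce_idem_mul_sub_idem_mul_mul_idem (hε : IsIdempotentElem ε) (r : A) :
    inPeirce ε 0 1 (ε * r - ε * r * ε) := by
  rw [inPeirce_zero_one_iff]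
  constructor
  · rw [mul_sub, flexible_of_alternative halt₁ halt₂, ← halt₁, ← halt₁ ε (r * ε),
      hε.eq]
  · rw [sub_mul, halt₂, hε.eq, sub_self]

lemma inPeirce.mul_mul_one_sub_eq_zero [IsAddTorsionFree A] (hε : IsIdempotentElem ε) {T : A}
    (hT : inPeirce ε 0 0 T) (hTm : ∀ m, inPeirce ε 0 1 m → T * m = 0) (r : A) :
    T * r * (1 - ε) = 0 := by
  have hr : T * r = T * (ε * r) := by
    have h := hT.mul_one_sub_mul_eq_zero halt₁ hε r
    rwa [sub_mul, one_mul, mul_sub, sub_eq_zero] at h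
  have h := linearize_right_alternative halt₂ ε (ε * r) T
  rw [← halt₁, hε.eq, (inPeirce_zero_zero_iff.mp hT).2, mul_add] at h
  calc T * r * (1 - ε) = T * (ε * r) - T * (ε * r) * ε := by rw [hr, mul_sub, mul_one]
    _ = T * (ε * r - ε * r * ε) := by rw [mul_sub, add_left_cancel h]
    _ = 0 := hTm _ (inPeirce_idem_mul_sub_idem_mul_mul_idem halt₁ halt₂ hε r)

lemma inPeirce_zero_zero_of_starJordan_one_sub_eq_zero [StarRing A] [IsAddTorsionFree A]
    (hεs : IsSelfAdjoint ε) (hε : IsIdempotentElem ε) {T : A} (h : starJordan (1 - ε) T = 0) :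
    inPeirce ε 0 0 T := by
  rw [starJordan_one_sub_left, hεs.starJordan_eq, sub_eq_zero] at h
  have hl : ε * (T * ε) = ε * T := by
    have h' := congrArg (ε * ·) h
    simp only [mul_add, ← halt₁, hε.eq] at h'
    exact (add_left_cancel h').symm
  have hr : ε * T * ε = T * ε := by
    have h' := congrArg (· * ε) h
    simp only [add_mul, halt₂, hε.eq] at h'
    exact (add_right_cancel h').symm
  have hc : ε * T = T * ε := by rw [← hl, ← flexible_of_alternative halt₁ halt₂, hr]
  have hT : ε * T = T := by
    rw [← hc, ← two_nsmul, ← two_nsmul, nsmul_right_inj two_ne_zero] at h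
    exact h.symm
  exact inPeirce_zero_zero_iff.mpr ⟨hT, hc ▸ hT⟩

omit halt₂ in
lemma eq_zero_of_starJordan_idem_eq_zero [StarRing A] [IsAddTorsionFree A]
    (hεs : IsSelfAdjoint ε) (hε : IsIdempotentElem ε) {R : A} (h₁ : starJordan R ε = 0)
    (h₂ : starJordan R (1 - ε) = 0) (h₃ : starJordan (ε - (1 - ε)) R = 0) : R = 0 := by
  have hskew : star R = -R := by
    have h : starJordan R (ε + (1 - ε)) = 0 := by rw [starJordan_add_right, h₁, h₂, add_zero]
    rw [add_sub_cancel, starJordan_one_right] at h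
    exact eq_neg_of_add_eq_zero_right h
  have hcomm : ε * R = R * ε := by
    rw [starJordan, hskew, mul_neg, ← sub_eq_add_neg, sub_eq_zero] at h₁
    exact h₁.symm
  have hoff : ε * R + ε * R = R := by
    rw [starJordan_sub_left, starJordan_one_sub_left, hεs.starJordan_eq, ← hcomm, sub_eq_zero]
      at h₃
    have h := eq_sub_iff_add_eq.mp h₃
    rwa [← two_nsmul (ε * R + ε * R), ← two_nsmul R, nsmul_right_inj two_ne_zero] at h
  have hR : ε * R = R := by
    have h := congrArg (ε * ·) hoff
    simp only [mul_add, ← halt₁, hε.eq] at h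
    rw [hoff] at h
    exact h.symm
  rw [hR] at hoff
  exact add_eq_left.mp hoff


end PeirceAlternative

namespace IsJordanDerivationUpTo

variable {A : Type*} [NonAssocRing A] [StarRing A] {K : ℕ} {g : A →+ A →+ A} {Φ : A → A}
  {ε a b p q u v w : A}

theorem map_zero (hΦ : IsJordanDerivationUpTo K g Φ) : Φ 0 = 0 := by
  simpa using hΦ 0 0

theorem map_smul_starJordan_add_right (hΦ : IsJordanDerivationUpTo K g Φ) (x s t : A) :
    Φ (K • starJordan x (s + t)) = Φ (K • starJordan x s) + Φ (K • starJordan x t) +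
      K • starJordan x (Φ (s + t) - Φ s - Φ t) := by
  rw [hΦ, hΦ, hΦ]
  simp only [_root_.map_add, starJordan_add_right, starJordan_sub_right, smul_add, smul_sub]
  abel

theorem map_smul_starJordan_add_left (hΦ : IsJordanDerivationUpTo K g Φ) (y s t : A) :
    Φ (K • starJordan (s + t) y) = Φ (K • starJordan s y) + Φ (K • starJordan t y) +
      K • starJordan (Φ (s + t) - Φ s - Φ t) y := by
  rw [hΦ, hΦ, hΦ]
  simp only [_root_.map_add, AddMonoidHom.add_apply, starJordan_add_left, starJordan_sub_left,
    smul_add, smul_sub]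
  abel

variable [IsAddTorsionFree A]

theorem starJordan_map_add_sub_sub_eq_zero (hΦ : IsJordanDerivationUpTo K g Φ) (hK : K ≠ 0)
    {x s t : A}
    (h : Φ (K • starJordan x (s + t)) = Φ (K • starJordan x s) + Φ (K • starJordan x t)) :
    starJordan x (Φ (s + t) - Φ s - Φ t) = 0 := by
  rw [hΦ.map_smul_starJordan_add_right, add_eq_left, nsmul_eq_zero_iff_right hK] at h
  exact h

theorem map_add_sub_sub_starJordan_eq_zero (hΦ : IsJordanDerivationUpTo K g Φ) (hK : K ≠ 0)
    {y s t : A}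
    (h : Φ (K • starJordan (s + t) y) = Φ (K • starJordan s y) + Φ (K • starJordan t y)) :
    starJordan (Φ (s + t) - Φ s - Φ t) y = 0 := by
  rw [hΦ.map_smul_starJordan_add_left, add_eq_left, nsmul_eq_zero_iff_right hK] at h
  exact h

theorem map_add_of_inPeirce_01_10 (hΦ : IsJordanDerivationUpTo K g Φ) (hK : K ≠ 0)
    (halt₁ : ∀ a b : A, a * a * b = a * (a * b)) (hεs : IsSelfAdjoint ε)
    (hε : IsIdempotentElem ε) (hu : inPeirce ε 0 1 u) (hv : inPeirce ε 1 0 v) :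
    Φ (u + v) = Φ u + Φ v := by
  have hu' := inPeirce_zero_one_iff.mp hu
  have hv' := inPeirce_one_zero_iff.mp hv
  have hus := inPeirce_one_zero_iff.mp (hu.star hεs)
  have hvs := inPeirce_zero_one_iff.mp (hv.star hεs)
  rw [← sub_eq_zero, ← sub_sub]
  set R := Φ (u + v) - Φ u - Φ v
  have h₁ : starJordan R ε = 0 := by
    have hu₀ : starJordan u ε = 0 := by rw [starJordan, hu'.2, hus.1, add_zero]
    exact hΦ.map_add_sub_sub_starJordan_eq_zero hK
      (by simp [starJordan_add_left, hu₀, hΦ.map_zero])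
  have h₂ : starJordan R (1 - ε) = 0 := by
    have hv₀ : starJordan v (1 - ε) = 0 := by
      rw [starJordan, mul_sub, sub_mul, mul_one, one_mul, hv'.2, hvs.1, sub_self, sub_self,
        add_zero]
    exact hΦ.map_add_sub_sub_starJordan_eq_zero hK
      (by simp [starJordan_add_left, hv₀, hΦ.map_zero])
  have h₃ : starJordan (ε - (1 - ε)) R = 0 := by
    have hu₀ : starJordan (ε - (1 - ε)) u = 0 := by
      rw [starJordan_sub_left, starJordan_one_sub_left, hεs.starJordan_eq, hu'.1, hu'.2, add_zero,
        add_sub_cancel_right, sub_self]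
    exact hΦ.starJordan_map_add_sub_sub_eq_zero hK
      (by simp [starJordan_add_right, hu₀, hΦ.map_zero])
  exact eq_zero_of_starJordan_idem_eq_zero halt₁ hεs hε h₁ h₂ h₃

theorem map_add_of_inPeirce_00_of_add_eq (hΦ : IsJordanDerivationUpTo K g Φ) (hK : K ≠ 0)
    (hεs : IsSelfAdjoint ε) (ha : inPeirce ε 0 0 a) (hw : ε * w + w * ε = w) :
    Φ (a + w) = Φ a + Φ w := by
  have ha' := inPeirce_zero_zero_iff.mp ha
  rw [← sub_eq_zero, ← sub_sub]
  set T := Φ (a + w) - Φ a - Φ w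
  have h₁ : starJordan (1 - ε) T = 0 := by
    have ha₀ : starJordan (1 - ε) a = 0 := by
      rw [starJordan_one_sub_left, hεs.starJordan_eq, ha'.1, ha'.2, sub_self]
    exact hΦ.starJordan_map_add_sub_sub_eq_zero hK
      (by simp [starJordan_add_right, ha₀, hΦ.map_zero])
  have h₂ : starJordan (ε - (1 - ε)) T = 0 := by
    have hw₀ : starJordan (ε - (1 - ε)) w = 0 := by
      rw [starJordan_sub_left, starJordan_one_sub_left, hεs.starJordan_eq, hw,
        add_sub_cancel_right, sub_self]
    exact hΦ.starJordan_map_add_sub_sub_eq_zero hK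
      (by simp [starJordan_add_right, hw₀, hΦ.map_zero])
  refine eq_zero_of_starJordan_eq_zero ?_ h₁
  rw [← sub_add_cancel ε (1 - ε), starJordan_add_left, h₁, h₂, add_zero]

theorem map_add_add_of_inPeirce (hΦ : IsJordanDerivationUpTo K g Φ) (hK : K ≠ 0)
    (halt₁ : ∀ a b : A, a * a * b = a * (a * b)) (hεs : IsSelfAdjoint ε)
    (hε : IsIdempotentElem ε) (ha : inPeirce ε 0 0 a) (hu : inPeirce ε 0 1 u)
    (hv : inPeirce ε 1 0 v) :
    Φ (a + u + v) = Φ a + Φ u + Φ v := by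
  have hu' := inPeirce_zero_one_iff.mp hu
  have hv' := inPeirce_one_zero_iff.mp hv
  have hw : ε * (u + v) + (u + v) * ε = u + v := by
    rw [mul_add, add_mul, hu'.1, hu'.2, hv'.1, hv'.2]
    abel
  rw [add_assoc, hΦ.map_add_of_inPeirce_00_of_add_eq hK hεs ha hw,
    hΦ.map_add_of_inPeirce_01_10 hK halt₁ hεs hε hu hv, add_assoc]

theorem map_nsmul_add_of_inPeirce_01 (hΦ : IsJordanDerivationUpTo K g Φ) (hK : K ≠ 0)
    (halt₁ : ∀ a b : A, a * a * b = a * (a * b))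
    (halt₂ : ∀ a b : A, b * a * a = b * (a * a))
    (hεs : IsSelfAdjoint ε) (hε : IsIdempotentElem ε) (hp : inPeirce ε 0 1 p)
    (hq : inPeirce ε 0 1 q) :
    Φ (K • (p + q)) = Φ (K • p) + Φ (K • q) := by
  have hp' := inPeirce_zero_one_iff.mp hp
  have hq' := inPeirce_zero_one_iff.mp hq
  have hqs := inPeirce_one_zero_iff.mp (hq.star hεs)
  have e₁ : ε * (1 - ε) = 0 := by rw [mul_sub, mul_one, hε.eq, sub_self]
  have e₂ : (1 - ε) * ε = 0 := by rw [sub_mul, one_mul, hε.eq, sub_self]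
  have e₃ : q * (1 - ε) = q := by rw [mul_sub, mul_one, hq'.2, sub_zero]
  have e₄ : (1 - ε) * star q = star q := by rw [sub_mul, one_mul, hqs.1, sub_zero]
  have hεy : starJordan ε (p + (1 - ε)) = p := by
    rw [hεs.starJordan_eq, mul_add, add_mul, hp'.1, e₁, hp'.2, e₂, add_zero, add_zero,
      add_zero]
  have hqy : starJordan q (p + (1 - ε)) = p * star q + q + (q * p + star q) := by
    rw [starJordan, mul_add, add_mul, e₃, e₄]
    abel
  have hεq : Φ (ε + q) = Φ ε + Φ q :=
    hΦ.map_add_of_inPeirce_00_of_add_eq hK hεs (inPeirce_self hε)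
      (by rw [hq'.1, hq'.2, add_zero])
  have hpq := hp.mul_01_10 halt₁ halt₂ (hq.star hεs)
  have hv := (hq.mul_01_01 halt₁ halt₂ hp).add (hq.star hεs)
  have hsplit : ∀ u, inPeirce ε 0 1 u → Φ (K • (p * star q + u + (q * p + star q))) =
      Φ (K • (p * star q)) + Φ (K • u) + Φ (K • (q * p + star q)) := fun u hu => by
    rw [smul_add, smul_add]
    exact hΦ.map_add_add_of_inPeirce hK halt₁ hεs hε (hpq.nsmul K) (hu.nsmul K) (hv.nsmul K)
  -- Expand `(ε + q) • (p + (1 - ε))` with `Φ (ε + q) = Φ ε + Φ q`: the extra terms `p q*` and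
  -- `q p + q*` lie in `A₁₁` and `A₂₁` and split off on both sides, leaving `Φ (K (p + q))`.
  have h := hΦ.map_smul_starJordan_add_left (p + (1 - ε)) ε q
  have hεqy : starJordan (ε + q) (p + (1 - ε)) = p * star q + (p + q) + (q * p + star q) := by
    rw [starJordan_add_left, hεy, hqy]
    abel
  rw [hεq, add_sub_cancel_left, sub_self, starJordan_zero_left, smul_zero, add_zero, hεqy, hεy,
    hqy, hsplit _ (hp.add hq), hsplit _ hq] at h
  rw [← sub_eq_zero] at h ⊢
  rw [← h]
  abel

theorem map_add_of_inPeirce_01 (hΦ : IsJordanDerivationUpTo K g Φ) (hK : K ≠ 0)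
    (halt₁ : ∀ a b : A, a * a * b = a * (a * b))
    (halt₂ : ∀ a b : A, b * a * a = b * (a * a))
    (hεs : IsSelfAdjoint ε) (hε : IsIdempotentElem ε) (hp : inPeirce ε 0 1 p)
    (hq : inPeirce ε 0 1 q) :
    Φ (p + q) = Φ p + Φ q := by
  have hsplit := hΦ.map_nsmul_add_of_inPeirce_01 hK halt₁ halt₂ hεs hε hp hq
  have hε₀ : ∀ x, inPeirce ε 0 1 x → starJordan ε x = x := fun x hx => by
    rw [hεs.starJordan_eq, (inPeirce_zero_one_iff.mp hx).1, (inPeirce_zero_one_iff.mp hx).2,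
      add_zero]
  have hε₁ : ∀ x, inPeirce ε 0 1 x → starJordan (1 - ε) x = x := fun x hx => by
    rw [starJordan_one_sub_left, hε₀ x hx, add_sub_cancel_right]
  rw [← sub_eq_zero, ← sub_sub]
  refine eq_zero_of_starJordan_eq_zero (x := ε) ?_ ?_
  · refine hΦ.starJordan_map_add_sub_sub_eq_zero hK ?_
    rwa [hε₀ _ (hp.add hq), hε₀ _ hp, hε₀ _ hq]
  · refine hΦ.starJordan_map_add_sub_sub_eq_zero hK ?_
    rwa [hε₁ _ (hp.add hq), hε₁ _ hp, hε₁ _ hq]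

theorem map_add_of_inPeirce_00 (hΦ : IsJordanDerivationUpTo K g Φ) (hK : K ≠ 0)
    (halt₁ : ∀ a b : A, a * a * b = a * (a * b))
    (halt₂ : ∀ a b : A, b * a * a = b * (a * a))
    (hεs : IsSelfAdjoint ε) (hε : IsIdempotentElem ε)
    (hε_cancel : ∀ x : A, (∀ r : A, x * r * (1 - ε) = 0) → x = 0)
    (ha : inPeirce ε 0 0 a) (hb : inPeirce ε 0 0 b) :
    Φ (a + b) = Φ a + Φ b := by
  have ha' := inPeirce_zero_zero_iff.mp ha
  rw [← sub_eq_zero, ← sub_sub]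
  set T := Φ (a + b) - Φ a - Φ b
  have hT : inPeirce ε 0 0 T := by
    have ha₀ : starJordan (1 - ε) a = 0 := by
      rw [starJordan_one_sub_left, hεs.starJordan_eq, ha'.1, ha'.2, sub_self]
    exact inPeirce_zero_zero_of_starJordan_one_sub_eq_zero halt₁ halt₂ hεs hε
      (hΦ.starJordan_map_add_sub_sub_eq_zero hK
        (by simp [starJordan_add_right, ha₀, hΦ.map_zero]))
  have hTm : ∀ m, inPeirce ε 0 1 m → T * m = 0 := by
    intro m hm
    have hjm : ∀ x, inPeirce ε 0 0 x → starJordan x m = x * m := fun x hx => by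
      rw [starJordan, hm.mul_01_00_eq_zero halt₂ hε (hx.star hεs), add_zero]
    have h : starJordan T m = 0 := by
      refine hΦ.map_add_sub_sub_starJordan_eq_zero hK ?_
      rw [starJordan_add_left, hjm a ha, hjm b hb, smul_add]
      exact hΦ.map_add_of_inPeirce_01 hK halt₁ halt₂ hεs hε
        ((ha.mul_00_01 halt₁ halt₂ hm).nsmul K) ((hb.mul_00_01 halt₁ halt₂ hm).nsmul K)
    rwa [hjm T hT] at h
  exact hε_cancel T (hT.mul_mul_one_sub_eq_zero halt₁ halt₂ hε hTm)

end IsJordanDerivationUpTo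

theorem stmt_8_general {A : Type*} [NonAssocRing A] [Module ℂ A]
    [StarRing A]
    (halt₁ : ∀ a b : A, a * a * b = a * (a * b))
    (halt₂ : ∀ a b : A, b * a * a = b * (a * a))
    (e : A) (heStar : star e = e) (heIdem : e * e = e)
    (hsp : ∀ x : A, (∀ r : A, x * r * e = 0) → x = 0)
    (hcl : ∀ x : A, (∀ r : A, x * r * (1 - e) = 0) → x = 0)
    (n : ℕ) (hn : 2 ≤ n) (Φ : A → A)
    (hΦ : ∀ x y : A,
      Φ (leftStarJordan (List.ofFn (lastTwoFamily n x y))) =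
        ∑ k : Fin n, leftStarJordan (List.ofFn
          (Function.update (lastTwoFamily n x y) k (Φ (lastTwoFamily n x y k))))) :
    ∀ i : Fin 2, ∀ a b : A, inPeirce e i i a → inPeirce e i i b →
      Φ (a + b) = Φ a + Φ b := by
  have := IsAddTorsionFree.of_isTorsionFree ℂ A
  obtain ⟨N, rfl⟩ : ∃ N, n = N + 2 := ⟨n - 2, by omega⟩
  obtain ⟨g, hg⟩ := exists_isJordanDerivationUpTo hΦ
  have hK : 2 ^ N ≠ 0 := pow_ne_zero N two_ne_zero
  refine Fin.forall_fin_two.mpr ⟨fun a b ha hb => ?_, fun a b ha hb => ?_⟩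
  · exact hg.map_add_of_inPeirce_00 hK halt₁ halt₂ heStar heIdem hcl ha hb
  · rw [← inPeirce_one_sub_zero_zero_iff] at ha hb
    refine hg.map_add_of_inPeirce_00 hK halt₁ halt₂ ((IsSelfAdjoint.one A).sub heStar)
      (IsIdempotentElem.one_sub heIdem) ?_ ha hb
    simpa only [sub_sub_cancel] using hsp

theorem stmt_8 {A : Type*} [NonAssocRing A] [Module ℂ A]
    [SMulCommClass ℂ A A] [IsScalarTower ℂ A A] [StarRing A]
    (halt₁ : ∀ a b : A, a * a * b = a * (a * b))
    (halt₂ : ∀ a b : A, b * a * a = b * (a * a))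
    (e : A) (heStar : star e = e) (heIdem : e * e = e) (he0 : e ≠ 0) (he1 : e ≠ 1)
    (hsp : ∀ x : A, (∀ r : A, x * r * e = 0) → x = 0)
    (hcl : ∀ x : A, (∀ r : A, x * r * (1 - e) = 0) → x = 0)
    (n : ℕ) (hn : 2 ≤ n) (Φ : A → A)
    (hΦ : ∀ x y : A,
      Φ (leftStarJordan (List.ofFn (lastTwoFamily n x y))) =
        ∑ k : Fin n, leftStarJordan (List.ofFn
          (Function.update (lastTwoFamily n x y) k (Φ (lastTwoFamily n x y k))))) :
    ∀ i : Fin 2, ∀ a b : A, inPeirce e i i a → inPeirce e i i b →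
      Φ (a + b) = Φ a + Φ b :=
  stmt_8_general halt₁ halt₂ e heStar heIdem hsp hcl n hn Φ hΦ
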